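/- arXiv:1608.05541 — 2 statements merged into one kernel-verified Lean document; each statement's English description precedes it below -/
import Mathlib

section
/- Let n ≥ 1 and let ψ : ℂ^n → ℝ be any function. Then ψ̂ = ψ (i.e., ψ̂(w) = ψ(w) ∈ ℝ for all w ∈ ℂ^n) if and only if ψ(z) = ‖z‖² for all z ∈ ℂ^n. -/
open scoped ComplexConjugate

noncomputable section

/-- The real pairing 2·Re(Σ_j z_j·conj(w_j)) on ℂⁿ. -/
def cpair {n : ℕ} (z w : EuclideanSpace ℂ (Fin n)) : ℝ :=
  2 * (∑ j, z j * conj (w j)).re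

/-- The complex Legendre transform ψ̂(w) = sup_z [2·Re(Σ z_j conj(w_j)) − ψ(z)] ∈ ℝ ∪ {+∞}. -/
def cLeg {n : ℕ} (ψ : EuclideanSpace ℂ (Fin n) → ℝ) (w : EuclideanSpace ℂ (Fin n)) : EReal :=
  ⨆ z : EuclideanSpace ℂ (Fin n), ((cpair z w - ψ z : ℝ) : EReal)

/-! Fenchel–Young gives `ψ ≥ ‖·‖²` for a self-dual `ψ`; since the transform is order-reversing and
`‖·‖²` is self-dual, this yields `ψ = ψ̂ ≤ ‖·‖²`. -/

section

variable {n : ℕ}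

lemma cpair_eq_two_re_inner (z w : EuclideanSpace ℂ (Fin n)) :
    cpair z w = 2 * (inner ℂ w z).re :=
  rfl

lemma cpair_self (w : EuclideanSpace ℂ (Fin n)) : cpair w w = 2 * ‖w‖ ^ 2 := by
  rw [cpair_eq_two_re_inner, ← RCLike.re_to_complex, inner_self_eq_norm_sq]

lemma cpair_sub_norm_sq (z w : EuclideanSpace ℂ (Fin n)) :
    cpair z w - ‖z‖ ^ 2 = ‖w‖ ^ 2 - ‖z - w‖ ^ 2 := by
  have hsub := norm_sub_sq (𝕜 := ℂ) z w
  have hsymm := inner_re_symm (𝕜 := ℂ) z w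
  simp only [RCLike.re_to_complex] at hsub hsymm
  rw [cpair_eq_two_re_inner]
  linarith

lemma cpair_le_norm_sq_add_norm_sq (z w : EuclideanSpace ℂ (Fin n)) :
    cpair z w ≤ ‖z‖ ^ 2 + ‖w‖ ^ 2 := by
  have := cpair_sub_norm_sq z w
  nlinarith [sq_nonneg ‖z - w‖]

lemma le_cLeg (ψ : EuclideanSpace ℂ (Fin n) → ℝ) (z w : EuclideanSpace ℂ (Fin n)) :
    ((cpair z w - ψ z : ℝ) : EReal) ≤ cLeg ψ w :=
  le_iSup (fun u => ((cpair u w - ψ u : ℝ) : EReal)) z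

lemma cLeg_le_coe_iff (ψ : EuclideanSpace ℂ (Fin n) → ℝ) (w : EuclideanSpace ℂ (Fin n))
    (c : ℝ) : cLeg ψ w ≤ c ↔ ∀ z, cpair z w - ψ z ≤ c := by
  simp only [cLeg, iSup_le_iff, EReal.coe_le_coe_iff]

lemma cLeg_antitone {ψ φ : EuclideanSpace ℂ (Fin n) → ℝ} (hψφ : ψ ≤ φ)
    (w : EuclideanSpace ℂ (Fin n)) : cLeg φ w ≤ cLeg ψ w :=
  iSup_mono fun z => EReal.coe_le_coe_iff.mpr (by linarith [hψφ z])

lemma cLeg_norm_sq (w : EuclideanSpace ℂ (Fin n)) :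
    cLeg (fun z => ‖z‖ ^ 2) w = ((‖w‖ ^ 2 : ℝ) : EReal) := by
  refine le_antisymm ((cLeg_le_coe_iff _ w _).mpr fun z => ?_) ?_
  · linarith [cpair_le_norm_sq_add_norm_sq z w]
  · have := le_cLeg (fun z => ‖z‖ ^ 2) w w
    rwa [cpair_self, show 2 * ‖w‖ ^ 2 - ‖w‖ ^ 2 = ‖w‖ ^ 2 by ring] at this

lemma norm_sq_le_of_cLeg_eq_self {ψ : EuclideanSpace ℂ (Fin n) → ℝ}
    (hψ : ∀ w, cLeg ψ w = (ψ w : EReal)) (z : EuclideanSpace ℂ (Fin n)) : ‖z‖ ^ 2 ≤ ψ z := by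
  have hz := le_cLeg ψ z z
  rw [hψ z, EReal.coe_le_coe_iff, cpair_self] at hz
  linarith

end

theorem complex_legendre_selfdual_iff_general (n : ℕ)
    (ψ : EuclideanSpace ℂ (Fin n) → ℝ) :
    (∀ w : EuclideanSpace ℂ (Fin n), cLeg ψ w = (ψ w : EReal))
      ↔ (∀ z : EuclideanSpace ℂ (Fin n), ψ z = ‖z‖ ^ 2) := by
  constructor
  · intro hψ z
    have hlow : (fun z => ‖z‖ ^ 2) ≤ ψ := norm_sq_le_of_cLeg_eq_self hψ
    have hup : cLeg ψ z ≤ ((‖z‖ ^ 2 : ℝ) : EReal) := cLeg_norm_sq z ▸ cLeg_antitone hlow z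
    rw [hψ z, EReal.coe_le_coe_iff] at hup
    exact le_antisymm hup (hlow z)
  · intro hψ w
    obtain rfl : ψ = fun z => ‖z‖ ^ 2 := funext hψ
    exact cLeg_norm_sq w

/-- For ψ : ℂⁿ → ℝ (n ≥ 1), ψ̂ = ψ (real-valued) iff ψ(z) = ‖z‖² for all z. -/
theorem complex_legendre_selfdual_iff (n : ℕ) (hn : 1 ≤ n)
    (ψ : EuclideanSpace ℂ (Fin n) → ℝ) :
    (∀ w : EuclideanSpace ℂ (Fin n), cLeg ψ w = (ψ w : EReal))
      ↔ (∀ z : EuclideanSpace ℂ (Fin n), ψ z = ‖z‖ ^ 2) :=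
  complex_legendre_selfdual_iff_general n ψ
end
end

section
/- Let n ≥ 1, let Ω ⊆ ℂ^n be open, and let φ : Ω → ℝ be real-analytic (as a function of the 2n real variables). Then there exist an open set W with Δ_Ω ⊆ W ⊆ Ω × Ω and a polarization F of φ on W. -/
open scoped ComplexConjugate

noncomputable section

/-- `F` is a polarization of `φ : Ω → ℝ` on a set `W ⊆ Ω × Ω` containing the diagonal:
`z ↦ F(z,w)` is holomorphic, `w ↦ conj (F(z,w))` is holomorphic, and `F(p,p) = φ(p)`
for `p ∈ Ω`. -/
def IsPolarization {n : ℕ} (Ω : Set (EuclideanSpace ℂ (Fin n)))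
    (φ : EuclideanSpace ℂ (Fin n) → ℝ)
    (W : Set (EuclideanSpace ℂ (Fin n) × EuclideanSpace ℂ (Fin n)))
    (F : EuclideanSpace ℂ (Fin n) × EuclideanSpace ℂ (Fin n) → ℂ) : Prop :=
  (∀ w, DifferentiableOn ℂ (fun z => F (z, w)) {z | (z, w) ∈ W}) ∧
  (∀ z, DifferentiableOn ℂ (fun w => conj (F (z, w))) {w | (z, w) ∈ W}) ∧
  (∀ p ∈ Ω, F (p, p) = (φ p : ℂ))

/-!
Expand `φ` around `c ∈ Ω` as `∑ₖ Pₖ (x - c, …, x - c)` with real multilinear `Pₖ`. For `(z, w)`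
near `(c, c)` write `z - c = a + I • b` and `w - c = a - I • b` and expand every `Pₖ (a + I • b, …)`
multilinearly. The result is complex multilinear for the complex structure on the product in which
the second factor is the conjugate space (multiplication by `I` is `(z, w) ↦ (I • z, -(I • w))`),
so its sum is holomorphic in `z`, antiholomorphic in `w`, and equals `φ` on the diagonal, where
`b = 0`.

Such a local polarization is unique on `U × U` for convex open `U`: on each complex line
`t ↦ (a, a) + t • (b, b)` of that structure it is a holomorphic function of one variable that is
determined by its values at real `t`, which lie on the diagonal, and at `t = I` the line passes
through `(a + I • b, a - I • b)`. Hence the local polarizations on small balls around the points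
of `Ω` agree on overlaps and glue to one on `⋃ B(c, r_c) × B(c, r_c)`.
-/

open Complex Function Filter Set
open scoped NNReal ENNReal Topology

section ComplexLinear

variable {E F : Type*} [NormedAddCommGroup E] [NormedSpace ℂ E] [NormedAddCommGroup F]
  [NormedSpace ℂ F]

theorem Complex.smul_eq_re_smul_add_im_smul_I_smul {M : Type*} [AddCommGroup M] [Module ℂ M]
    (a : ℂ) (x : M) : a • x = a.re • x + a.im • I • x := by
  rw [← coe_smul, ← coe_smul, smul_smul, ← add_smul, re_add_im]

def ContinuousLinearMap.complexOfMapISMul (f : E →L[ℝ] F) (hf : ∀ x, f (I • x) = I • f x) :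
    E →L[ℂ] F where
  toFun := f
  map_add' := f.map_add
  map_smul' a x := by
    simp only [RingHom.id_apply, smul_eq_re_smul_add_im_smul_I_smul a, map_add, map_smul, hf]
  cont := f.continuous

theorem HasFDerivAt.differentiableAt_complex {f : E → F} {f' : E →L[ℝ] F} {x : E}
    (hf : HasFDerivAt f f' x) (hf' : ∀ u, f' (I • u) = I • f' u) : DifferentiableAt ℂ f x :=
  (hasFDerivAt_of_restrictScalars ℝ (f' := f'.complexOfMapISMul hf') hf rfl).differentiableAt

end ComplexLinear

theorem Complex.frequently_nhdsNE_zero_of_eventually_ofReal {P : ℂ → Prop}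
    (h : ∀ᶠ x : ℝ in 𝓝 0, P x) : ∃ᶠ t in 𝓝[≠] (0 : ℂ), P t := by
  refine (tendsto_nhdsWithin_iff.2 ⟨?_, ?_⟩).frequently
    (h.filter_mono (nhdsWithin_le_nhds (s := {0}ᶜ))).frequently
  · exact (continuous_ofReal.tendsto' 0 0 ofReal_zero).mono_left nhdsWithin_le_nhds
  · filter_upwards [self_mem_nhdsWithin] with x hx using ofReal_ne_zero.2 hx

section Piecewise

variable {ι β : Type*} [DecidableEq ι] {s : Finset ι} {j : ι}

theorem Finset.piecewise_update_update_of_notMem (hj : j ∉ s) (f g : ι → β) (a b : β) :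
    s.piecewise (update f j a) (update g j b) = update (s.piecewise f g) j b := by
  rw [update_piecewise_of_notMem (hi := hj)]
  exact s.piecewise_congr (fun i hi => update_of_ne (ne_of_mem_of_not_mem hi hj) _ _)
    fun _ _ => rfl

theorem Finset.piecewise_insert_update_update (hj : j ∉ s) (f g : ι → β) (a b : β) :
    (insert j s).piecewise (update f j a) (update g j b) = update (s.piecewise f g) j a := by
  rw [piecewise_insert, piecewise_update_update_of_notMem hj, update_idem, update_self]

theorem Finset.sum_univ_eq_sum_powerset_erase [Fintype ι] {M : Type*} [AddCommMonoid M]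
    (j : ι) (f : Finset ι → M) :
    ∑ S, f S = ∑ S ∈ (univ.erase j).powerset, (f S + f (insert j S)) := by
  rw [sum_add_distrib, ← sum_powerset_insert (notMem_erase j univ), insert_erase (mem_univ j),
    powerset_univ]

end Piecewise

namespace Polarization

variable {E : Type*} [NormedAddCommGroup E] [NormedSpace ℂ E] {k : ℕ}

/-- Multiplication by `I` on `E × E` regarded as `E × Ē`. -/
def twistI : E × E →L[ℝ] E × E :=
  (I • ContinuousLinearMap.fst ℝ E E).prod (-(I • ContinuousLinearMap.snd ℝ E E))

@[simp] theorem twistI_apply (v : E × E) : twistI v = (I • v.1, -(I • v.2)) := rfl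

theorem twistI_twistI (v : E × E) : twistI (twistI v) = -v := by
  ext <;> simp [smul_smul]

/-- `v = (a + I • b, a - I • b)` with `a = twRe v` and `b = twIm v`. -/
def twRe : E × E →L[ℝ] E :=
  (2⁻¹ : ℝ) • (ContinuousLinearMap.fst ℝ E E + ContinuousLinearMap.snd ℝ E E)

def twIm : E × E →L[ℝ] E :=
  (-I / 2) • (ContinuousLinearMap.fst ℝ E E - ContinuousLinearMap.snd ℝ E E)

@[simp] theorem twRe_apply (v : E × E) : twRe v = (2⁻¹ : ℝ) • (v.1 + v.2) := rfl

@[simp] theorem twIm_apply (v : E × E) : twIm v = (-I / 2) • (v.1 - v.2) := rfl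

theorem twRe_add_twistI_twIm (v : E × E) :
    (twRe v, twRe v) + twistI (twIm v, twIm v) = v := by
  ext <;> simp only [twRe_apply, twIm_apply, twistI_apply, Prod.fst_add, Prod.snd_add] <;>
    match_scalars <;> ring_nf <;> simp [I_sq] <;> ring

theorem twRe_twistI (v : E × E) : twRe (twistI v) = -twIm v := by
  simp only [twRe_apply, twIm_apply, twistI_apply]
  match_scalars <;> ring

theorem twIm_twistI (v : E × E) : twIm (twistI v) = twRe v := by
  simp only [twRe_apply, twIm_apply, twistI_apply]
  match_scalars <;> ring_nf <;> rw [I_sq] <;> ring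

theorem twRe_diag (x : E) : twRe (x, x) = x := by
  simp only [twRe_apply]
  module

theorem twIm_diag (x : E) : twIm (x, x) = 0 := by
  simp

theorem twRe_mem_of_convex {U : Set E} (hU : Convex ℝ U) {v : E × E} (hv : v ∈ U ×ˢ U) :
    twRe v ∈ U := by
  simpa [smul_add] using hU hv.1 hv.2 (by norm_num : (0 : ℝ) ≤ 2⁻¹) (by norm_num) (by norm_num)

theorem norm_twRe_le : ‖(twRe : E × E →L[ℝ] E)‖ ≤ 1 := by
  refine ContinuousLinearMap.opNorm_le_bound _ zero_le_one fun v => ?_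
  rw [twRe_apply, norm_smul, one_mul]
  have := norm_add_le v.1 v.2
  have := norm_fst_le v
  have := norm_snd_le v
  norm_num
  linarith

theorem norm_twIm_le : ‖(twIm : E × E →L[ℝ] E)‖ ≤ 1 := by
  refine ContinuousLinearMap.opNorm_le_bound _ zero_le_one fun v => ?_
  rw [twIm_apply, norm_smul, one_mul]
  have := norm_sub_le v.1 v.2
  have := norm_fst_le v
  have := norm_snd_le v
  norm_num
  linarith

/-- Complex multilinearity with respect to `twistI`. -/
def IsTwisted (M : ContinuousMultilinearMap ℝ (fun _ : Fin k => E × E) ℂ) : Prop :=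
  ∀ v j x, M (update v j (twistI x)) = I * M (update v j x)

theorem IsTwisted.sum {ι : Type*} (s : Finset ι)
    {M : ι → ContinuousMultilinearMap ℝ (fun _ : Fin k => E × E) ℂ}
    (h : ∀ i ∈ s, IsTwisted (M i)) : IsTwisted (∑ i ∈ s, M i) := by
  intro v j x
  simp only [sum_apply, Finset.mul_sum]
  exact Finset.sum_congr rfl fun i hi => h i hi v j x

theorem IsTwisted.tsum {M : ℕ → ContinuousMultilinearMap ℝ (fun _ : Fin k => E × E) ℂ}
    (h : ∀ l, IsTwisted (M l)) : IsTwisted (∑' l, M l) := by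
  intro v j x
  by_cases hM : Summable M
  · simp only [ContinuousMultilinearMap.tsum_eval hM, ← tsum_mul_left, h _ v j x]
  · simp [tsum_eq_zero_of_not_summable hM]

theorem IsTwisted.changeOriginSeriesTerm {q : FormalMultilinearSeries ℝ (E × E) ℂ} {l : ℕ}
    (hq : IsTwisted (q (k + l))) (s : Finset (Fin (k + l))) (hs : s.card = l)
    (y : Fin l → E × E) : IsTwisted (q.changeOriginSeriesTerm k l s hs y) := by
  intro v j x
  simp only [FormalMultilinearSeries.changeOriginSeriesTerm,
    ContinuousMultilinearMap.curryFinFinset_apply, ← Sum.update_elim_inr,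
    update_apply_equiv_apply, Equiv.symm_symm]
  exact hq _ _ x

theorem IsTwisted.changeOrigin {q : FormalMultilinearSeries ℝ (E × E) ℂ}
    (hq : ∀ n, IsTwisted (q n)) (y : E × E) (k : ℕ) : IsTwisted (q.changeOrigin y k) := by
  refine IsTwisted.tsum fun l => ?_
  rw [FormalMultilinearSeries.changeOriginSeries, sum_apply]
  exact IsTwisted.sum _ fun s _ => (hq (k + l)).changeOriginSeriesTerm s.1 s.2 _

def TwistedHolomorphicAt (G : E × E → ℂ) (v : E × E) : Prop :=
  ∃ D : E × E →L[ℝ] ℂ, HasFDerivAt G D v ∧ ∀ u, D (twistI u) = I * D u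

namespace TwistedHolomorphicAt

variable {G H : E × E → ℂ} {v : E × E}

theorem sub (hG : TwistedHolomorphicAt G v) (hH : TwistedHolomorphicAt H v) :
    TwistedHolomorphicAt (G - H) v := by
  obtain ⟨D, hD, hDI⟩ := hG
  obtain ⟨D', hD', hD'I⟩ := hH
  exact ⟨D - D', hD.sub hD', fun u => by simp only [sub_apply, hDI, hD'I, mul_sub]⟩

theorem congr_of_eventuallyEq (hG : TwistedHolomorphicAt G v) (h : H =ᶠ[𝓝 v] G) :
    TwistedHolomorphicAt H v := by
  obtain ⟨D, hD, hDI⟩ := hG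
  exact ⟨D, hD.congr_of_eventuallyEq h, hDI⟩

theorem differentiableAt_left {z w : E} (hG : TwistedHolomorphicAt G (z, w)) :
    DifferentiableAt ℂ (fun z => G (z, w)) z := by
  obtain ⟨D, hD, hDI⟩ := hG
  refine (hD.comp z (hasFDerivAt_prodMk_left z w)).differentiableAt_complex fun u => ?_
  simpa using hDI (u, 0)

theorem differentiableAt_conj_right {z w : E} (hG : TwistedHolomorphicAt G (z, w)) :
    DifferentiableAt ℂ (fun w => conj (G (z, w))) w := by
  obtain ⟨D, hD, hDI⟩ := hG
  refine (conjCLE.toContinuousLinearMap.hasFDerivAt.comp w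
    (hD.comp w (hasFDerivAt_prodMk_right z w))).differentiableAt_complex fun u => ?_
  have h : ((0 : E), I • u) = -twistI (0, u) := by simp
  change conj (D (0, I • u)) = I • conj (D (0, u))
  rw [h, map_neg, hDI]
  simp

end TwistedHolomorphicAt

theorem _root_.HasFPowerSeriesAt.twistedHolomorphicAt {G : E × E → ℂ}
    {q : FormalMultilinearSeries ℝ (E × E) ℂ} {v : E × E} (hG : HasFPowerSeriesAt G q v)
    (hq : IsTwisted (q 1)) : TwistedHolomorphicAt G v := by
  refine ⟨_, hG.hasFDerivAt, fun u => ?_⟩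
  have h := hq (fun _ => u) 0 u
  simp only [update_eq_const_of_subsingleton] at h
  exact h

theorem _root_.HasFPowerSeriesOnBall.twistedHolomorphicAt {G : E × E → ℂ}
    {q : FormalMultilinearSeries ℝ (E × E) ℂ} {c v : E × E} {r : ℝ≥0∞}
    (hG : HasFPowerSeriesOnBall G q c r) (hq : ∀ n, IsTwisted (q n)) (hv : v ∈ Metric.eball c r) :
    TwistedHolomorphicAt G v := by
  have h : (‖v - c‖₊ : ℝ≥0∞) < r := by simpa [edist_eq_enorm_sub, enorm_eq_nnnorm] using hv
  have hG' : HasFPowerSeriesAt G (q.changeOrigin (v - c)) v := by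
    simpa using (hG.changeOrigin h).hasFPowerSeriesAt
  exact hG'.twistedHolomorphicAt (IsTwisted.changeOrigin hq _ 1)

/-- The complex line through `0` and `d` for the complex structure `twistI`. -/
def twistedLine (d : E × E) : ℂ →L[ℝ] E × E :=
  reCLM.smulRight d + imCLM.smulRight (twistI d)

@[simp] theorem twistedLine_apply (d : E × E) (t : ℂ) :
    twistedLine d t = t.re • d + t.im • twistI d := rfl

theorem twistedLine_I_smul (d : E × E) (t : ℂ) :
    twistedLine d (I • t) = twistI (twistedLine d t) := by
  simp only [twistedLine_apply, map_add, map_smul, twistI_twistI, smul_eq_mul, mul_re, mul_im,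
    I_re, I_im]
  module

theorem TwistedHolomorphicAt.differentiableAt_comp_twistedLine {G : E × E → ℂ} {c d : E × E}
    {t : ℂ} (hG : TwistedHolomorphicAt G (c + twistedLine d t)) :
    DifferentiableAt ℂ (fun s => G (c + twistedLine d s)) t := by
  obtain ⟨D, hD, hDI⟩ := hG
  refine (hD.comp t ((twistedLine d).hasFDerivAt.const_add c)).differentiableAt_complex
    fun s => ?_
  change D (twistedLine d (I • s)) = I • D (twistedLine d s)
  rw [twistedLine_I_smul, hDI, smul_eq_mul]

theorem eqOn_zero_of_forall_diag_eq_zero {G : E × E → ℂ} {U : Set E} (hU : IsOpen U)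
    (hUc : Convex ℝ U) (hG : ∀ v ∈ U ×ˢ U, TwistedHolomorphicAt G v)
    (h0 : ∀ x ∈ U, G (x, x) = 0) : EqOn G 0 (U ×ˢ U) := by
  intro v hv
  set c : E × E := (twRe v, twRe v)
  set d : E × E := (twIm v, twIm v)
  set T : Set ℂ := (fun t => c + twistedLine d t) ⁻¹' (U ×ˢ U)
  have hTo : IsOpen T := (hU.prod hU).preimage (by fun_prop)
  have hTc : Convex ℝ T := ((hUc.prod hUc).translate_preimage_right c).linear_preimage
    (twistedLine d).toLinearMap
  have hGT : AnalyticOnNhd ℂ (fun t => G (c + twistedLine d t)) T :=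
    DifferentiableOn.analyticOnNhd (fun t ht =>
      (hG _ ht).differentiableAt_comp_twistedLine.differentiableWithinAt) hTo
  have h0T : (0 : ℂ) ∈ T := by
    show c + twistedLine d 0 ∈ U ×ˢ U
    simpa [c] using And.intro (twRe_mem_of_convex hUc hv) (twRe_mem_of_convex hUc hv)
  have hreal : ∀ᶠ x : ℝ in 𝓝 0, G (c + twistedLine d x) = 0 := by
    filter_upwards [(continuous_ofReal.isOpen_preimage T hTo).mem_nhds (by simpa using h0T)]
      with x (hx : c + twistedLine d x ∈ U ×ˢ U)
    have hdiag : c + twistedLine d x = (twRe v + x • twIm v, twRe v + x • twIm v) := by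
      simp [c, d]
    rw [hdiag] at hx ⊢
    exact h0 _ hx.1
  have hIT : c + twistedLine d I = v := by simpa [c, d] using twRe_add_twistI_twIm v
  have := hGT.eqOn_zero_of_preconnected_of_frequently_eq_zero hTc.isPreconnected h0T
    (frequently_nhdsNE_zero_of_eventually_ofReal hreal)
    (show c + twistedLine d I ∈ U ×ˢ U by rwa [hIT])
  simpa only [hIT, Pi.zero_apply] using this

/-- Expands `p (a₁ + I • b₁, …, aₖ + I • bₖ)` multilinearly, with `a = twRe` and `b = twIm`. -/
def complexify (p : ContinuousMultilinearMap ℝ (fun _ : Fin k => E) ℝ) :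
    ContinuousMultilinearMap ℝ (fun _ : Fin k => E × E) ℂ :=
  ∑ S : Finset (Fin k), I ^ S.card •
    (ofRealCLM.compContinuousMultilinearMap p).compContinuousLinearMap
      fun j => if j ∈ S then twIm else twRe

theorem complexify_apply (p : ContinuousMultilinearMap ℝ (fun _ : Fin k => E) ℝ)
    (v : Fin k → E × E) :
    complexify p v =
      ∑ S : Finset (Fin k), I ^ S.card * p (S.piecewise (twIm ∘ v) (twRe ∘ v)) := by
  simp only [complexify, sum_apply, smul_apply,
    ContinuousMultilinearMap.compContinuousLinearMap_apply,
    ContinuousLinearMap.compContinuousMultilinearMap_coe, comp_apply, ofRealCLM_apply, smul_eq_mul]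
  refine Finset.sum_congr rfl fun S _ => ?_
  congr 3
  ext j
  by_cases hj : j ∈ S <;> simp [hj]

theorem complexify_diag (p : ContinuousMultilinearMap ℝ (fun _ : Fin k => E) ℝ) (m : Fin k → E) :
    complexify p (fun j => (m j, m j)) = p m := by
  rw [complexify_apply, Finset.sum_eq_single ∅ _ (by simp)]
  · simp only [Finset.card_empty, pow_zero, one_mul, Finset.piecewise_empty, comp_def, twRe_diag]
  · intro S _ hS
    obtain ⟨j, hj⟩ := Finset.nonempty_iff_ne_empty.2 hS
    have hzero : S.piecewise (twIm ∘ fun j => (m j, m j)) (twRe ∘ fun j => (m j, m j)) j = 0 := by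
      simp only [Finset.piecewise_eq_of_mem _ _ _ hj, comp_apply, twIm_diag]
    rw [p.map_coord_zero j hzero, ofReal_zero, mul_zero]

theorem complexify_apply_update (p : ContinuousMultilinearMap ℝ (fun _ : Fin k => E) ℝ)
    (v : Fin k → E × E) (j : Fin k) (y : E × E) :
    complexify p (update v j y) = ∑ S ∈ (Finset.univ.erase j).powerset,
      I ^ S.card * (p (update (S.piecewise (twIm ∘ v) (twRe ∘ v)) j (twRe y)) +
        I * p (update (S.piecewise (twIm ∘ v) (twRe ∘ v)) j (twIm y))) := by
  rw [complexify_apply, Finset.sum_univ_eq_sum_powerset_erase j]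
  refine Finset.sum_congr rfl fun S hS => ?_
  have hj : j ∉ S := fun h => Finset.notMem_erase j _ (Finset.mem_powerset.1 hS h)
  rw [comp_update, comp_update, Finset.piecewise_update_update_of_notMem hj,
    Finset.piecewise_insert_update_update hj, Finset.card_insert_of_notMem hj, pow_succ]
  ring

theorem isTwisted_complexify (p : ContinuousMultilinearMap ℝ (fun _ : Fin k => E) ℝ) :
    IsTwisted (complexify p) := by
  intro v j x
  have hneg : ∀ m y, p (update m j (-y)) = -p (update m j y) :=
    fun m y => p.toMultilinearMap.map_update_neg m j y
  simp only [complexify_apply_update, twRe_twistI, twIm_twistI, Finset.mul_sum, hneg]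
  refine Finset.sum_congr rfl fun S _ => ?_
  push_cast
  ring_nf
  rw [I_sq]
  ring

theorem norm_complexify_le (p : ContinuousMultilinearMap ℝ (fun _ : Fin k => E) ℝ) :
    ‖complexify p‖ ≤ 2 ^ k * ‖p‖ := by
  have hterm : ∀ S : Finset (Fin k), ‖I ^ S.card •
      (ofRealCLM.compContinuousMultilinearMap p).compContinuousLinearMap
        (fun j => if j ∈ S then (twIm : E × E →L[ℝ] E) else twRe)‖ ≤ ‖p‖ := by
    intro S
    rw [norm_smul, norm_pow, norm_I, one_pow, one_mul]
    refine (ContinuousMultilinearMap.norm_compContinuousLinearMap_le _ _).trans ?_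
    refine (mul_le_of_le_one_right (norm_nonneg _) (Finset.prod_le_one (fun _ _ => norm_nonneg _)
      fun j _ => ?_)).trans ?_
    · split_ifs
      exacts [norm_twIm_le, norm_twRe_le]
    · simpa [ofRealCLM_norm] using ofRealCLM.norm_compContinuousMultilinearMap_le p
  calc ‖complexify p‖ ≤ ∑ _S : Finset (Fin k), ‖p‖ :=
        (norm_sum_le _ _).trans (Finset.sum_le_sum fun S _ => hterm S)
    _ = 2 ^ k * ‖p‖ := by simp [Finset.card_univ]

def complexifySeries (p : FormalMultilinearSeries ℝ E ℝ) : FormalMultilinearSeries ℝ (E × E) ℂ :=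
  fun k => complexify (p k)

theorem complexifySeries_sum_diag (p : FormalMultilinearSeries ℝ E ℝ) (y : E) :
    (complexifySeries p).sum (y, y) = p.sum y := by
  simp only [FormalMultilinearSeries.sum, complexifySeries, complexify_diag, ofReal_tsum]

theorem le_radius_complexifySeries (p : FormalMultilinearSeries ℝ E ℝ) {r : ℝ≥0}
    (hr : (r : ℝ≥0∞) < p.radius) : ((r / 2 : ℝ≥0) : ℝ≥0∞) ≤ (complexifySeries p).radius := by
  obtain ⟨C, -, hC⟩ := p.norm_mul_pow_le_of_lt_radius hr
  refine (complexifySeries p).le_radius_of_bound C fun k => ?_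
  calc ‖complexify (p k)‖ * ((r / 2 : ℝ≥0) : ℝ) ^ k ≤ 2 ^ k * ‖p k‖ * ((r : ℝ) / 2) ^ k := by
        push_cast
        gcongr
        exact norm_complexify_le _
    _ = ‖p k‖ * r ^ k := by
        rw [div_pow]
        field_simp
    _ ≤ C := hC k

variable {φ : E → ℝ} {U V : Set E} {F G : E × E → ℂ}

def IsLocalPolarization (φ : E → ℝ) (U : Set E) (F : E × E → ℂ) : Prop :=
  (∀ v ∈ U ×ˢ U, TwistedHolomorphicAt F v) ∧ ∀ x ∈ U, F (x, x) = φ x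

theorem IsLocalPolarization.mono (hF : IsLocalPolarization φ U F) (hVU : V ⊆ U) :
    IsLocalPolarization φ V F :=
  ⟨fun v hv => hF.1 v (prod_mono hVU hVU hv), fun x hx => hF.2 x (hVU hx)⟩

theorem IsLocalPolarization.eqOn (hU : IsOpen U) (hUc : Convex ℝ U)
    (hF : IsLocalPolarization φ U F) (hG : IsLocalPolarization φ U G) : EqOn F G (U ×ˢ U) :=
  fun _ hv => sub_eq_zero.1 <| eqOn_zero_of_forall_diag_eq_zero hU hUc
    (fun v hv => (hF.1 v hv).sub (hG.1 v hv)) (fun x hx => by simp [hF.2 x hx, hG.2 x hx]) hv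

theorem exists_isLocalPolarization_ball {x : E} (hφ : AnalyticAt ℝ φ x) :
    ∃ r > (0 : ℝ), ∃ F, IsLocalPolarization φ (Metric.ball x r) F := by
  obtain ⟨p, R, hp⟩ := hφ
  obtain ⟨r, hr0, hrR⟩ := ENNReal.lt_iff_exists_nnreal_btwn.1 hp.r_pos
  have hr0' : (0 : ℝ≥0∞) < (r / 2 : ℝ≥0) := by simpa using hr0.ne'
  set q := complexifySeries p
  have hrq := le_radius_complexifySeries p (hrR.trans_le hp.r_le)
  have hq : HasFPowerSeriesOnBall (fun v => q.sum (v - (x, x))) q (x, x) (r / 2 : ℝ≥0) := by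
    simpa using ((q.hasFPowerSeriesOnBall (hr0'.trans_le hrq)).mono hr0' hrq).comp_sub (x, x)
  have hball : Metric.ball x (r / 2 : ℝ≥0) ⊆ Metric.eball x R := by
    rw [← Metric.eball_coe]
    exact Metric.eball_subset_eball ((ENNReal.coe_le_coe.2 (half_le_self r.2)).trans hrR.le)
  refine ⟨(r / 2 : ℝ≥0), by simpa using hr0, _, fun v hv => hq.twistedHolomorphicAt
    (fun k => isTwisted_complexify _) ?_, fun y hy => ?_⟩
  · rwa [ball_prod_same, ← Metric.eball_coe] at hv
  · have hy : y - x ∈ Metric.eball (0 : E) R := by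
      simpa [Metric.mem_eball, edist_eq_enorm_sub] using hball hy
    simp only [Prod.mk_sub_mk, q, complexifySeries_sum_diag, ← hp.sum hy, add_sub_cancel]

theorem exists_isLocalPolarization_ball_subset {Ω : Set E} (hΩ : IsOpen Ω)
    (hφ : AnalyticOnNhd ℝ φ Ω) {x : E} (hx : x ∈ Ω) :
    ∃ r > (0 : ℝ), Metric.ball x r ⊆ Ω ∧ ∃ F, IsLocalPolarization φ (Metric.ball x r) F := by
  obtain ⟨r, hr, F, hF⟩ := exists_isLocalPolarization_ball (hφ x hx)
  obtain ⟨ε, hε, hεΩ⟩ := Metric.isOpen_iff.1 hΩ x hx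
  exact ⟨min r ε, lt_min hr hε, (Metric.ball_subset_ball (min_le_right _ _)).trans hεΩ, F,
    hF.mono (Metric.ball_subset_ball (min_le_left _ _))⟩

theorem exists_twistedHolomorphic_polarization {Ω : Set E} (hΩ : IsOpen Ω)
    (hφ : AnalyticOnNhd ℝ φ Ω) :
    ∃ (W : Set (E × E)) (F : E × E → ℂ), IsOpen W ∧ (∀ p ∈ Ω, (p, p) ∈ W) ∧ W ⊆ Ω ×ˢ Ω ∧
      (∀ v ∈ W, TwistedHolomorphicAt F v) ∧ ∀ p ∈ Ω, F (p, p) = φ p := by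
  classical
  choose! r hr hrΩ Fl hFl using fun x (hx : x ∈ Ω) =>
    exists_isLocalPolarization_ball_subset hΩ hφ hx
  set B : E → Set E := fun x => Metric.ball x (r x)
  have hB : ∀ x ∈ Ω, x ∈ B x := fun x hx => Metric.mem_ball_self (hr x hx)
  have hagree : ∀ x ∈ Ω, ∀ y ∈ Ω, EqOn (Fl x) (Fl y) ((B x ∩ B y) ×ˢ (B x ∩ B y)) :=
    fun x hx y hy => IsLocalPolarization.eqOn (Metric.isOpen_ball.inter Metric.isOpen_ball)
      ((convex_ball _ _).inter (convex_ball _ _)) ((hFl x hx).mono inter_subset_left)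
      ((hFl y hy).mono inter_subset_right)
  let F : E × E → ℂ := fun v => if h : ∃ x ∈ Ω, v ∈ B x ×ˢ B x then Fl h.choose v else 0
  have hF : ∀ x ∈ Ω, EqOn F (Fl x) (B x ×ˢ B x) := by
    intro x hx v hv
    have h : ∃ x ∈ Ω, v ∈ B x ×ˢ B x := ⟨x, hx, hv⟩
    obtain ⟨hy, hvy⟩ := h.choose_spec
    simp only [F, dif_pos h]
    exact hagree _ hy x hx ⟨⟨hvy.1, hv.1⟩, ⟨hvy.2, hv.2⟩⟩
  refine ⟨⋃ x ∈ Ω, B x ×ˢ B x, F, isOpen_biUnion fun x _ => Metric.isOpen_ball.prod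
    Metric.isOpen_ball, fun x hx => mem_biUnion hx ⟨hB x hx, hB x hx⟩,
    iUnion₂_subset fun x hx => prod_mono (hrΩ x hx) (hrΩ x hx), fun v hv => ?_, fun x hx => ?_⟩
  · obtain ⟨x, hx, hvx⟩ := mem_iUnion₂.1 hv
    exact ((hFl x hx).1 v hvx).congr_of_eventuallyEq (eventuallyEq_of_mem
      ((Metric.isOpen_ball.prod Metric.isOpen_ball).mem_nhds hvx) (hF x hx))
  · rw [hF x hx ⟨hB x hx, hB x hx⟩]
    exact (hFl x hx).2 x (hB x hx)

end Polarization

theorem polarization_exists_general (n : ℕ)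
    (Ω : Set (EuclideanSpace ℂ (Fin n))) (hΩ : IsOpen Ω)
    (φ : EuclideanSpace ℂ (Fin n) → ℝ) (hφ : AnalyticOnNhd ℝ φ Ω) :
    ∃ (W : Set (EuclideanSpace ℂ (Fin n) × EuclideanSpace ℂ (Fin n)))
      (F : EuclideanSpace ℂ (Fin n) × EuclideanSpace ℂ (Fin n) → ℂ),
      IsOpen W ∧ (∀ p ∈ Ω, (p, p) ∈ W) ∧ W ⊆ Ω ×ˢ Ω ∧ IsPolarization Ω φ W F := by
  obtain ⟨W, F, hW, hdiag, hWΩ, hF, hFφ⟩ :=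
    Polarization.exists_twistedHolomorphic_polarization hΩ hφ
  exact ⟨W, F, hW, hdiag, hWΩ,
    fun _ _ hz => (hF _ hz).differentiableAt_left.differentiableWithinAt,
    fun _ _ hw => (hF _ hw).differentiableAt_conj_right.differentiableWithinAt, hFφ⟩

/-- a real-analytic φ : Ω → ℝ on an open Ω ⊆ ℂⁿ admits a polarization on
some open set W with Δ_Ω ⊆ W ⊆ Ω × Ω. -/
theorem polarization_exists (n : ℕ) (hn : 1 ≤ n)
    (Ω : Set (EuclideanSpace ℂ (Fin n))) (hΩ : IsOpen Ω)
    (φ : EuclideanSpace ℂ (Fin n) → ℝ) (hφ : AnalyticOnNhd ℝ φ Ω) :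
    ∃ (W : Set (EuclideanSpace ℂ (Fin n) × EuclideanSpace ℂ (Fin n)))
      (F : EuclideanSpace ℂ (Fin n) × EuclideanSpace ℂ (Fin n) → ℂ),
      IsOpen W ∧ (∀ p ∈ Ω, (p, p) ∈ W) ∧ W ⊆ Ω ×ˢ Ω ∧ IsPolarization Ω φ W F :=
  polarization_exists_general n Ω hΩ φ hφ
end
end
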